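/- Let M : ℝ → ℝ be a nondecreasing function with M(t) = 0 for t ≤ 0, and suppose there exist constants γ₆, γ₇ > 0 such that γ₆ t³ |ln t| < M(t) < γ₇ t³ |ln t| for all 0 < t < 1/2, and M is bounded on [1/2, 2π²]. Then there exist positive constants c₁, c₂ such that for all sufficiently large λ, c₁ λ ln λ ≤ ∫₀^{2π²} λ⁴ e^{-λt} dM(t) ≤ c₂ λ ln λ, where the integral is a Riemann–Stieltjes integral. -/

import Mathlib

/-!
On `[1/λ, 2/λ]` the integrand `e^{-λt} M(t)` is at least `e^{-2} M(1/λ) ≥ e^{-2} γ₆ λ^{-3} log λ`,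
which gives the lower bound. For the upper bound, `log x ≤ x - 1` at `x = 1/(λt)` gives
`-log t ≤ log λ + 1/(λt)`, so `M(t) ≤ γ₇ (t³ log λ + t²/λ)` for `t < 1/2`, and the moments
`∫₀^∞ t^k e^{-λt} dt = k!/λ^{k+1}` bound this part by `O(λ^{-4} log λ)`. The range `t ≥ 1/2` and the
boundary term only contribute `O(λ⁵ e^{-λ/2})`.
-/

open Real MeasureTheory Filter

/-- The Riemann–Stieltjes integral `∫₀^{2π²} λ⁴ e^{-λt} dM(t)` expressed via
integration by parts as `λ⁴ M(2π²) e^{-2λπ²} + λ⁵ ∫₀^{2π²} e^{-λt} M(t) dt`. -/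
noncomputable def stieltjesExpIntegral (M : ℝ → ℝ) (l : ℝ) : ℝ :=
  l ^ 4 * M (2 * π ^ 2) * Real.exp (-2 * l * π ^ 2) +
    l ^ 5 * ∫ t in Set.Ioc (0 : ℝ) (2 * π ^ 2), Real.exp (-l * t) * M t

open Set Topology
open scoped Nat

lemma neg_log_le_log_add_inv {l t : ℝ} (hl : 0 < l) (ht : 0 < t) :
    -log t ≤ log l + (l * t)⁻¹ := by
  have h := log_le_sub_one_of_pos (inv_pos.2 (mul_pos hl ht))
  rw [log_inv, log_mul hl.ne' ht.ne'] at h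
  linarith

lemma Monotone.integrableOn_exp_mul {M : ℝ → ℝ} (hM : Monotone M) (l a b : ℝ) :
    IntegrableOn (fun t => exp (-l * t) * M t) (Ioc a b) :=
  (((hM.monotoneOn _).integrableOn_isCompact isCompact_Icc).continuousOn_mul
    (by fun_prop) isCompact_Icc).mono_set Ioc_subset_Icc_self

section

variable {M : ℝ → ℝ}

lemma exp_neg_two_mul_div_le_integral_exp_mul (hM : Monotone M) (hM₀ : 0 ≤ M) {l b : ℝ}
    (hl : 0 < l) (hb : 2 / l ≤ b) :
    exp (-2) * M (1 / l) / l ≤ ∫ t in Ioc 0 b, exp (-l * t) * M t := by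
  have hpt : ∀ t ∈ Ioc (1 / l) (2 / l), exp (-2) * M (1 / l) ≤ exp (-l * t) * M t := by
    rintro t ⟨ht₁, ht₂⟩
    have hlt : l * t ≤ 2 := by rwa [le_div_iff₀' hl] at ht₂
    gcongr
    · exact hM₀ _
    · linarith
    · exact hM ht₁.le
  calc exp (-2) * M (1 / l) / l = ∫ _ in Ioc (1 / l) (2 / l), exp (-2) * M (1 / l) := by
        rw [setIntegral_const, measureReal_def, volume_Ioc, ← sub_div, smul_eq_mul,
          ENNReal.toReal_ofReal (by positivity)]
        ring
    _ ≤ ∫ t in Ioc (1 / l) (2 / l), exp (-l * t) * M t :=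
        setIntegral_mono_on (integrableOn_const measure_Ioc_lt_top.ne)
          (hM.integrableOn_exp_mul _ _ _) measurableSet_Ioc hpt
    _ ≤ ∫ t in Ioc 0 b, exp (-l * t) * M t :=
        setIntegral_mono_set (hM.integrableOn_exp_mul _ _ _)
          (ae_of_all _ fun t => mul_nonneg (exp_nonneg _) (hM₀ t))
          (Ioc_subset_Ioc (by positivity) hb).eventuallyLE

lemma exp_mul_le_of_le_mul_abs_log (hM : Monotone M) (hM₀ : 0 ≤ M) {γ l b t : ℝ} (hγ : 0 ≤ γ)
    (hl : 1 ≤ l) (hupp : ∀ s, 0 < s → s < 1 / 2 → M s ≤ γ * s ^ 3 * |log s|) (ht : t ∈ Ioc 0 b) :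
    exp (-l * t) * M t ≤ γ * log l * (t ^ 3 * exp (-(l * t))) +
      γ / l * (t ^ 2 * exp (-(l * t))) + M b * exp (-(l / 2)) := by
  obtain ⟨ht₀, htb⟩ := ht
  have hl₀ : 0 < l := by linarith
  have hlog : 0 ≤ log l := log_nonneg hl
  rcases lt_or_ge t (1 / 2) with hsmall | hlarge
  · have hMt : M t ≤ γ * log l * t ^ 3 + γ / l * t ^ 2 := calc
        M t ≤ γ * t ^ 3 * -log t := by
          simpa only [abs_of_neg (log_neg ht₀ (by linarith))] using hupp t ht₀ hsmall
        _ ≤ γ * t ^ 3 * (log l + (l * t)⁻¹) := by gcongr; exact neg_log_le_log_add_inv hl₀ ht₀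
        _ = γ * log l * t ^ 3 + γ / l * t ^ 2 := by field_simp
    calc exp (-l * t) * M t ≤ exp (-l * t) * (γ * log l * t ^ 3 + γ / l * t ^ 2) := by gcongr
      _ = γ * log l * (t ^ 3 * exp (-(l * t))) + γ / l * (t ^ 2 * exp (-(l * t))) := by
        rw [neg_mul]; ring
      _ ≤ _ := le_add_of_nonneg_right (mul_nonneg (hM₀ b) (exp_nonneg _))
  · calc exp (-l * t) * M t ≤ M b * exp (-(l / 2)) := by
          rw [mul_comm]
          gcongr
          · exact hM₀ _
          · exact hM htb
          · nlinarith
      _ ≤ _ := le_add_of_nonneg_left (by positivity)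

lemma integral_exp_mul_le (hM : Monotone M) (hM₀ : 0 ≤ M) {γ l b : ℝ} (hγ : 0 ≤ γ) (hl : 1 ≤ l)
    (hb : 0 ≤ b) (hupp : ∀ t, 0 < t → t < 1 / 2 → M t ≤ γ * t ^ 3 * |log t|) :
    ∫ t in Ioc 0 b, exp (-l * t) * M t ≤
      γ * (6 * log l + 2) / l ^ 4 + b * M b * exp (-(l / 2)) := by
  have hl₀ : 0 < l := by linarith
  have hmom : ∀ n : ℕ, IntegrableOn (fun t => t ^ n * exp (-(l * t))) (Ioc 0 b) := fun n =>
    (by fun_prop : Continuous fun t => t ^ n * exp (-(l * t))).integrableOn_Ioc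
  have hmom_le : ∀ n : ℕ, ∫ t in Ioc 0 b, t ^ n * exp (-(l * t)) ≤ n ! / l ^ (n + 1) := by
    intro n
    rw [← intervalIntegral.integral_of_le hb]
    exact intervalIntegral_pow_mul_exp_neg_le hb hl₀
  have h₃ := (hmom 3).const_mul (γ * log l)
  have h₂ := (hmom 2).const_mul (γ / l)
  have hc : IntegrableOn (fun _ => M b * exp (-(l / 2))) (Ioc 0 b) :=
    integrableOn_const measure_Ioc_lt_top.ne
  calc ∫ t in Ioc 0 b, exp (-l * t) * M t
      ≤ ∫ t in Ioc 0 b, (γ * log l * (t ^ 3 * exp (-(l * t))) +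
          γ / l * (t ^ 2 * exp (-(l * t))) + M b * exp (-(l / 2))) :=
        setIntegral_mono_on (hM.integrableOn_exp_mul _ _ _) ((h₃.fun_add h₂).fun_add hc)
          measurableSet_Ioc fun t ht => exp_mul_le_of_le_mul_abs_log hM hM₀ hγ hl hupp ht
    _ = γ * log l * (∫ t in Ioc 0 b, t ^ 3 * exp (-(l * t))) +
          γ / l * (∫ t in Ioc 0 b, t ^ 2 * exp (-(l * t))) + b * (M b * exp (-(l / 2))) := by
        rw [integral_add (h₃.fun_add h₂) hc, integral_add h₃ h₂, integral_const_mul,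
          integral_const_mul, setIntegral_const, measureReal_def, volume_Ioc, sub_zero,
          ENNReal.toReal_ofReal hb, smul_eq_mul]
    _ ≤ γ * log l * (3 ! / l ^ (3 + 1)) + γ / l * (2 ! / l ^ (2 + 1)) +
          b * (M b * exp (-(l / 2))) := by
        have hlog : 0 ≤ log l := log_nonneg hl
        gcongr
        · exact hmom_le 3
        · exact hmom_le 2
    _ = γ * (6 * log l + 2) / l ^ 4 + b * M b * exp (-(l / 2)) := by
        simp only [Nat.factorial]
        field_simp
        ring

lemma mul_mul_log_le_stieltjesExpIntegral (hM : Monotone M) (hM₀ : 0 ≤ M) {γ l : ℝ}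
    (hlow : ∀ t, 0 < t → t < 1 / 2 → γ * t ^ 3 * |log t| ≤ M t) (hl : 2 < l) :
    γ * exp (-2) * l * log l ≤ stieltjesExpIntegral M l := by
  have hl₀ : 0 < l := by linarith
  have hb : 2 / l ≤ 2 * π ^ 2 := by
    rw [div_le_iff₀ hl₀]
    nlinarith [pi_gt_three]
  have hM_inv : γ * (1 / l) ^ 3 * log l ≤ M (1 / l) := by
    have h := hlow (1 / l) (by positivity) (by rw [div_lt_div_iff₀ hl₀ two_pos]; linarith)
    rwa [one_div, log_inv, abs_neg, abs_of_nonneg (log_nonneg (by linarith)), ← one_div] at h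
  have hbdry : 0 ≤ l ^ 4 * M (2 * π ^ 2) * exp (-2 * l * π ^ 2) :=
    mul_nonneg (mul_nonneg (by positivity) (hM₀ _)) (exp_nonneg _)
  calc γ * exp (-2) * l * log l = l ^ 5 * (exp (-2) * (γ * (1 / l) ^ 3 * log l) / l) := by
        field_simp
    _ ≤ l ^ 5 * (exp (-2) * M (1 / l) / l) := by gcongr
    _ ≤ l ^ 5 * ∫ t in Ioc 0 (2 * π ^ 2), exp (-l * t) * M t := by
        gcongr
        exact exp_neg_two_mul_div_le_integral_exp_mul hM hM₀ hl₀ hb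
    _ ≤ stieltjesExpIntegral M l := le_add_of_nonneg_left hbdry

lemma stieltjesExpIntegral_le (hM : Monotone M) (hM₀ : 0 ≤ M) {γ l : ℝ} (hγ : 0 ≤ γ)
    (hupp : ∀ t, 0 < t → t < 1 / 2 → M t ≤ γ * t ^ 3 * |log t|) (hl : 1 ≤ l) :
    stieltjesExpIntegral M l ≤
      γ * (6 * log l + 2) * l + (2 * π ^ 2 + 1) * M (2 * π ^ 2) * (l ^ 5 * exp (-(l / 2))) := by
  have hl₀ : 0 < l := by linarith
  have hπ : 1 ≤ π ^ 2 := by nlinarith [pi_gt_three]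
  have hbdry : l ^ 4 * M (2 * π ^ 2) * exp (-2 * l * π ^ 2) ≤
      l ^ 5 * M (2 * π ^ 2) * exp (-(l / 2)) := by
    have hMb : 0 ≤ M (2 * π ^ 2) := hM₀ _
    have hl₅Mb : 0 ≤ l ^ 5 * M (2 * π ^ 2) := by positivity
    have hpow : l ^ 4 ≤ l ^ 5 := pow_le_pow_right₀ hl (by norm_num)
    have hexp : -2 * l * π ^ 2 ≤ -(l / 2) := by nlinarith
    gcongr
  have hI := integral_exp_mul_le (b := 2 * π ^ 2) hM hM₀ hγ hl (by positivity) hupp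
  calc stieltjesExpIntegral M l
      ≤ l ^ 5 * M (2 * π ^ 2) * exp (-(l / 2)) + l ^ 5 * (γ * (6 * log l + 2) / l ^ 4 +
          2 * π ^ 2 * M (2 * π ^ 2) * exp (-(l / 2))) := by
        unfold stieltjesExpIntegral
        gcongr
    _ = _ := by field_simp; ring

end

theorem stieltjes_integral_asymptotics_general (M : ℝ → ℝ)
    (hmono : Monotone M) (hzero : ∀ t : ℝ, t ≤ 0 → M t = 0)
    (γ₆ γ₇ : ℝ) (hγ₆ : 0 < γ₆) (hγ₇ : 0 < γ₇)
    (hlow : ∀ t : ℝ, 0 < t → t < 1 / 2 → γ₆ * t ^ 3 * |Real.log t| < M t)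
    (hupp : ∀ t : ℝ, 0 < t → t < 1 / 2 → M t < γ₇ * t ^ 3 * |Real.log t|) :
    ∃ c₁ c₂ : ℝ, 0 < c₁ ∧ 0 < c₂ ∧ ∀ᶠ l : ℝ in atTop,
      c₁ * l * Real.log l ≤ stieltjesExpIntegral M l ∧
      stieltjesExpIntegral M l ≤ c₂ * l * Real.log l := by
  have hM₀ : 0 ≤ M := fun t => (hzero _ (min_le_right t 0)).symm.le.trans (hmono (min_le_left t 0))
  have htail : Tendsto (fun l => (2 * π ^ 2 + 1) * M (2 * π ^ 2) * (l ^ 4 * exp (-(l / 2))))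
      atTop (𝓝 0) := by
    have h := (tendsto_rpow_mul_exp_neg_mul_atTop_nhds_zero 4 (1 / 2) one_half_pos).const_mul
      ((2 * π ^ 2 + 1) * M (2 * π ^ 2))
    simp only [rpow_ofNat, mul_zero] at h
    convert h using 5
    ring
  refine ⟨γ₆ * exp (-2), 8 * γ₇ + 1, by positivity, by positivity, ?_⟩
  filter_upwards [eventually_gt_atTop 2, tendsto_log_atTop.eventually_ge_atTop 1,
    htail.eventually (eventually_le_nhds one_pos)] with l hl hlog htail_le
  refine ⟨mul_mul_log_le_stieltjesExpIntegral hmono hM₀ (fun t h₀ h₁ => (hlow t h₀ h₁).le) hl, ?_⟩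
  have hupper := stieltjesExpIntegral_le hmono hM₀ hγ₇.le (fun t h₀ h₁ => (hupp t h₀ h₁).le)
    (one_le_two.trans hl.le)
  calc stieltjesExpIntegral M l
      ≤ γ₇ * (6 * log l + 2) * l +
          l * ((2 * π ^ 2 + 1) * M (2 * π ^ 2) * (l ^ 4 * exp (-(l / 2)))) :=
        hupper.trans_eq (by ring)
    _ ≤ γ₇ * (6 * log l + 2 * log l) * l + l * log l := by
        gcongr
        · linarith
        · exact htail_le.trans hlog
    _ = (8 * γ₇ + 1) * l * log l := by ring

theorem stieltjes_integral_asymptotics (M : ℝ → ℝ)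
    (hmono : Monotone M) (hzero : ∀ t : ℝ, t ≤ 0 → M t = 0)
    (γ₆ γ₇ : ℝ) (hγ₆ : 0 < γ₆) (hγ₇ : 0 < γ₇)
    (hlow : ∀ t : ℝ, 0 < t → t < 1 / 2 → γ₆ * t ^ 3 * |Real.log t| < M t)
    (hupp : ∀ t : ℝ, 0 < t → t < 1 / 2 → M t < γ₇ * t ^ 3 * |Real.log t|)
    (hbdd : ∃ B : ℝ, ∀ t ∈ Set.Icc (1 / 2 : ℝ) (2 * π ^ 2), |M t| ≤ B) :
    ∃ c₁ c₂ : ℝ, 0 < c₁ ∧ 0 < c₂ ∧ ∀ᶠ l : ℝ in atTop,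
      c₁ * l * Real.log l ≤ stieltjesExpIntegral M l ∧
      stieltjesExpIntegral M l ≤ c₂ * l * Real.log l :=
  stieltjes_integral_asymptotics_general M hmono hzero γ₆ γ₇ hγ₆ hγ₇ hlow hupp
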